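/- Let G be a K_{2,2,2}-free hole-edge-disjoint simple graph, let C be a hole of G, and let e = uv be an edge of C. If S_{C,e} is empty, then the graph G − e obtained from G by deleting the edge e is a K_{2,2,2}-free hole-edge-disjoint graph whose number of holes satisfies h(G − e) ≤ h(G) − 1. -/

import Mathlib

open SimpleGraph

universe u

/-- A *hole* of a simple graph: an induced (chordless) cycle of length at least 4. -/
def IsHole {V : Type u} (G : SimpleGraph V) {v : V} (c : G.Walk v v) : Prop :=
  c.IsCycle ∧ 4 ≤ c.length ∧
    ∀ x ∈ c.support, ∀ y ∈ c.support, G.Adj x y → s(x, y) ∈ c.edges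

/-- A graph is *chordal* if it has no hole. -/
def Chordal {V : Type u} (G : SimpleGraph V) : Prop :=
  ∀ (v : V) (c : G.Walk v v), ¬ IsHole G c

/-- A graph is *hole-edge-disjoint* if any two of its holes either have the same edge set
or share no edge. -/
def HoleEdgeDisjoint {V : Type u} (G : SimpleGraph V) : Prop :=
  ∀ (u v : V) (c₁ : G.Walk u u) (c₂ : G.Walk v v), IsHole G c₁ → IsHole G c₂ →
    ({e | e ∈ c₁.edges} = {e | e ∈ c₂.edges} ∨ ∀ e ∈ c₁.edges, e ∉ c₂.edges)

/-- The complete tripartite graph `K_{2,2,2}`. -/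
def K222 : SimpleGraph (Fin 3 × Fin 2) where
  Adj a b := a.1 ≠ b.1
  symm := ⟨fun _ _ h => Ne.symm h⟩
  loopless := ⟨fun _ h => h rfl⟩

/-- A graph is `K_{2,2,2}`-free if it has no induced subgraph isomorphic to `K_{2,2,2}`. -/
def K222Free {V : Type u} (G : SimpleGraph V) : Prop :=
  ¬ ∃ f : Fin 3 × Fin 2 → V, Function.Injective f ∧
      ∀ a b, G.Adj (f a) (f b) ↔ K222.Adj a b

/-- `X_C`: the set of vertices adjacent to every vertex of the hole `C`. -/
def holeNbrs {V : Type u} (G : SimpleGraph V) {v : V} (c : G.Walk v v) : Set V :=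
  {x | ∀ y ∈ c.support, G.Adj x y}

/-- `V(C) ∪ X_C`. -/
def avoidSet {V : Type u} (G : SimpleGraph V) {v : V} (c : G.Walk v v) : Set V :=
  {x | x ∈ c.support} ∪ holeNbrs G c

/-- A `C`-avoiding path: a path none of whose internal vertices lie in `V(C) ∪ X_C`,
and, if it has length 1, at least one of its two vertices is not in `V(C) ∪ X_C`. -/
def IsCAvoidingPath {V : Type u} (G : SimpleGraph V) {v : V} (c : G.Walk v v)
    {a b : V} (W : G.Walk a b) : Prop :=
  W.IsPath ∧
    (∀ x ∈ W.support, x ≠ a → x ≠ b → x ∉ avoidSet G c) ∧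
    (W.length = 1 → a ∉ avoidSet G c ∨ b ∉ avoidSet G c)

/-- `S_{C,e}` for `e = ab`: all internal vertices of `C`-avoiding `(a,b)`-paths. -/
def Sset {V : Type u} (G : SimpleGraph V) {v : V} (c : G.Walk v v) (a b : V) : Set V :=
  {w | ∃ W : G.Walk a b, IsCAvoidingPath G c W ∧ w ∈ W.support ∧ w ≠ a ∧ w ≠ b}

/-- `T_{C,e}` for `e = ab`: all vertices `w` such that `a w b` is a `C`-avoiding path. -/
def Tset {V : Type u} (G : SimpleGraph V) {v : V} (c : G.Walk v v) (a b : V) : Set V :=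
  {w | ∃ (h₁ : G.Adj a w) (h₂ : G.Adj w b),
      IsCAvoidingPath G c (Walk.cons h₁ (Walk.cons h₂ Walk.nil))}

/-- `X_{C,e} = X_C ∪ {a, b}` for `e = ab`. -/
def Xce {V : Type u} (G : SimpleGraph V) {v : V} (c : G.Walk v v) (a b : V) : Set V :=
  holeNbrs G c ∪ {a, b}

/-- The number of connected components of a graph. -/
noncomputable def numComponents {V : Type u} (G : SimpleGraph V) : ℕ :=
  Nat.card G.ConnectedComponent

/-- `X` is a vertex cut of `G` if `G − X` has more connected components than `G`. -/
def IsVertexCut {V : Type u} (G : SimpleGraph V) (X : Set V) : Prop :=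
  numComponents G < numComponents (G.induce Xᶜ)

/-- A clique cut: a vertex cut which is a clique. -/
def IsCliqueCut {V : Type u} (G : SimpleGraph V) (X : Set V) : Prop :=
  G.IsClique X ∧ IsVertexCut G X

/-- `U` is a union of connected components of `G − X`. -/
def IsComponentUnion {V : Type u} (G : SimpleGraph V) (X U : Set V) : Prop :=
  U ⊆ Xᶜ ∧ ∀ a b : ↥(Xᶜ), (G.induce Xᶜ).Reachable a b → ((a : V) ∈ U ↔ (b : V) ∈ U)

/-- A chordal cut: a clique cut `X` such that there is a (nonempty) union `U` of
connected components of `G − X` with `G[U ∪ X]` chordal. -/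
def IsChordalCut {V : Type u} (G : SimpleGraph V) (X : Set V) : Prop :=
  IsCliqueCut G X ∧
    ∃ U : Set V, U.Nonempty ∧ IsComponentUnion G X U ∧ Chordal (G.induce (U ∪ X))

/-- `x` lies in `Q_{C,e}`, the connected component of `G − X_{C,e}` containing
`V(C) \ {a, b}` (for `e = ab`). -/
def InQ {V : Type u} (G : SimpleGraph V) {v : V} (c : G.Walk v v) (a b : V) (x : V) : Prop :=
  ∃ (hx : x ∈ (Xce G c a b)ᶜ) (y : V) (hy : y ∈ (Xce G c a b)ᶜ),
    y ∈ c.support ∧ y ≠ a ∧ y ≠ b ∧ (G.induce (Xce G c a b)ᶜ).Reachable ⟨x, hx⟩ ⟨y, hy⟩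

/-- The vertex set of `U_{C,e}`: the union of the connected components of
`G − X_{C,e}` other than `Q_{C,e}` containing a vertex of `T_{C,e}`. -/
def Uset {V : Type u} (G : SimpleGraph V) {v : V} (c : G.Walk v v) (a b : V) : Set V :=
  {x | ∃ hx : x ∈ (Xce G c a b)ᶜ, ¬ InQ G c a b x ∧
      ∃ (t : V) (ht : t ∈ (Xce G c a b)ᶜ), t ∈ Tset G c a b ∧ ¬ InQ G c a b t ∧
        (G.induce (Xce G c a b)ᶜ).Reachable ⟨x, hx⟩ ⟨t, ht⟩}

/-- `G` has the chordal property: there are a hole `C` and an edge `e` of `C` such that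
`G[V(U_{C,e}) ∪ X_{C,e}]` is chordal. -/
def HasChordalProperty {V : Type u} (G : SimpleGraph V) : Prop :=
  ∃ (v : V) (c : G.Walk v v) (a b : V), IsHole G c ∧ s(a, b) ∈ c.edges ∧
    Chordal (G.induce (Uset G c a b ∪ Xce G c a b))

/-- `h(G)`: the number of holes of `G`, counted by their edge sets. -/
noncomputable def holeCount {V : Type u} (G : SimpleGraph V) : ℕ :=
  Nat.card {s : Set (Sym2 V) // ∃ (v : V) (c : G.Walk v v), IsHole G c ∧ s = {e | e ∈ c.edges}}

/-- `G` together with `k` added isolated vertices. -/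
def addIsolated {V : Type u} (G : SimpleGraph V) (k : ℕ) : SimpleGraph (V ⊕ Fin k) where
  Adj a b := ∃ x y, G.Adj x y ∧ a = Sum.inl x ∧ b = Sum.inl y
  symm := by
    refine ⟨?_⟩
    rintro a b ⟨x, y, h, rfl, rfl⟩
    exact ⟨y, x, h.symm, rfl, rfl⟩
  loopless := by
    refine ⟨?_⟩
    rintro a ⟨x, y, h, rfl, hy⟩
    obtain rfl := Sum.inl.inj hy
    exact G.loopless.irrefl x h

/-- A digraph (given by its arc relation) is acyclic: it has no directed closed walk. -/
def IsAcyclicDigraph {α : Type u} (r : α → α → Prop) : Prop :=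
  ∀ x, ¬ Relation.TransGen r x x

/-- `H` is the competition graph of some acyclic digraph: distinct vertices are adjacent
iff they have a common out-neighbour (prey). -/
def IsCompetitionGraphOfAcyclicDigraph {α : Type u} (H : SimpleGraph α) : Prop :=
  ∃ r : α → α → Prop, IsAcyclicDigraph r ∧
    ∀ a b : α, H.Adj a b ↔ a ≠ b ∧ ∃ x, r a x ∧ r b x

/-- The competition number `k(G)`: the least `k` such that `G` together with `k` isolated
vertices is the competition graph of an acyclic digraph. -/
noncomputable def compNumber {V : Type u} (G : SimpleGraph V) : ℕ :=
  sInf {k | IsCompetitionGraphOfAcyclicDigraph (addIsolated G k)}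

/-!
Let `G' = G - ab`. A hole of `G'` is a hole of `G` unless it passes through both `a` and `b`,
and such a hole `D` cannot exist: it splits into two internally disjoint `a`–`b` paths, each
induced in `G` apart from the edge `ab`. As `S_{C,e} = ∅`, each of them has an interior vertex in
`V(C) ∪ X_C`, and a common neighbour of `a` and `b` lies in `X_C` (a triangle cannot sit on a
hole). If one path has length at least 3, it closes with `ab` to a hole of `G` sharing `ab` with
`C`, so it carries all of `C`; then an interior vertex of the other path in `V(C) ∪ X_C` lies in
`X_C`, and its edge to an interior vertex of the first path is a chord of `D`. If both paths have
length 2, their midpoints are two non-adjacent vertices of `X_C`: on a hole of length 4 they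
complete a `K_{2,2,2}`, on a longer hole they give two holes sharing an edge.

Hence the holes of `G'` are holes of `G` other than `C`, which gives hole-edge-disjointness and
`h(G') ≤ h(G) - 1`. An induced `K_{2,2,2}` of `G'` through `a` and `b` has its other four
vertices in `X_C`, and with `a` and a vertex of `C` non-adjacent to `a` they form a `K_{2,2,2}`
of `G`.
-/

namespace SimpleGraph.Walk

variable {V : Type u} {G : SimpleGraph V}

lemma support_subset_of_forall_mem_edges {u w : V} (p : G.Walk u w) {S : Set V} (hu : u ∈ S)
    (hS : ∀ x ∈ S, ∀ y, s(x, y) ∈ p.edges → y ∈ S) : ∀ z ∈ p.support, z ∈ S := by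
  induction p with
  | nil => simpa using hu
  | cons h q ih =>
    have hq : ∀ x ∈ S, ∀ y, s(x, y) ∈ q.edges → y ∈ S :=
      fun x hx y hy => hS x hx y (List.mem_cons_of_mem _ hy)
    rintro z (_ | ⟨_, hz⟩)
    · exact hu
    · exact ih (hS _ hu _ List.mem_cons_self) hq z hz

lemma support_subset_of_mem_of_forall_mem_edges {v x : V} (c : G.Walk v v) (hx : x ∈ c.support)
    {S : Set V} (hxS : x ∈ S) (hS : ∀ x ∈ S, ∀ y, s(x, y) ∈ c.edges → y ∈ S) :
    ∀ z ∈ c.support, z ∈ S := by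
  classical
  intro z hz
  refine (c.rotate x hx).support_subset_of_forall_mem_edges hxS
    (fun y hy t ht => hS y hy t ((c.rotate_edges x hx).mem_iff.1 ht)) z ?_
  exact (c.mem_support_rotate_iff x hx).2 hz

namespace IsCycle

variable {v x : V} {c : G.Walk v v}

lemma exists_mem_edges_iff (hc : c.IsCycle) (hx : x ∈ c.support) :
    ∃ p q, p ≠ q ∧ ∀ z, s(x, z) ∈ c.edges ↔ z = p ∨ z = q := by
  obtain ⟨p, q, hpq, h⟩ := Set.ncard_eq_two.mp (hc.ncard_neighborSet_toSubgraph_eq_two hx)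
  refine ⟨p, q, hpq, fun z => ?_⟩
  rw [← adj_toSubgraph_iff_mem_edges, ← Subgraph.mem_neighborSet, h]
  simp

lemma eq_or_eq_of_mem_edges (hc : c.IsCycle) {y z t : V} (hyz : y ≠ z)
    (hy : s(x, y) ∈ c.edges) (hz : s(x, z) ∈ c.edges) (ht : s(x, t) ∈ c.edges) : t = y ∨ t = z := by
  obtain ⟨p, q, -, h⟩ := hc.exists_mem_edges_iff (c.fst_mem_support_of_mem_edges hy)
  rw [h] at hy hz ht
  grind

lemma length_le_card (hc : c.IsCycle) {S : Finset V} (h : ∀ z ∈ c.support, z ∈ S) :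
    c.length ≤ S.card := by
  classical
  have hcard : c.support.tail.toFinset.card = c.length := by
    rw [List.toFinset_card_of_nodup hc.support_nodup, List.length_tail, length_support]
    rfl
  exact hcard ▸ Finset.card_le_card fun z hz =>
    h z (List.mem_of_mem_tail (List.mem_toFinset.1 hz))

lemma exists_isPath_isPath (hc : c.IsCycle) {a b : V} (ha : a ∈ c.support) (hb : b ∈ c.support)
    (hab : a ≠ b) :
    ∃ P Q : G.Walk a b, P.IsPath ∧ Q.IsPath ∧ (∀ x ∈ P.support, x ∈ Q.support → x = a ∨ x = b) ∧
      (∀ e, e ∈ c.edges ↔ e ∈ P.edges ∨ e ∈ Q.edges) ∧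
      (∀ x ∈ P.support, x ∈ c.support) ∧ (∀ x ∈ Q.support, x ∈ c.support) := by
  classical
  have hc' : (c.rotate a ha).IsCycle := hc.rotate ha
  have hb' : b ∈ (c.rotate a ha).support := (c.mem_support_rotate_iff a ha).2 hb
  set P := (c.rotate a ha).takeUntil b hb'
  set R := (c.rotate a ha).dropUntil b hb'
  have hPR : P.append R = c.rotate a ha := take_spec _ hb'
  have hnodup : (P.support.tail ++ R.support.tail).Nodup := by
    rw [← tail_support_append, hPR]
    exact hc'.support_nodup
  refine ⟨P, R.reverse, hc'.isPath_takeUntil hb',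
    (IsCycle.isPath_of_append_right (not_nil_of_ne hab) (hPR.symm ▸ hc')).reverse, ?_, ?_, ?_, ?_⟩
  · intro x hxP hxR
    rw [support_reverse, List.mem_reverse, ← cons_tail_support] at hxR
    rw [← cons_tail_support] at hxP
    rcases hxP with _ | ⟨_, hxP⟩
    · exact Or.inl rfl
    rcases hxR with _ | ⟨_, hxR⟩
    · exact Or.inr rfl
    exact (List.disjoint_of_nodup_append hnodup hxP hxR).elim
  · intro e
    rw [← (c.rotate_edges a ha).mem_iff, ← hPR, edges_append, List.mem_append, edges_reverse,
      List.mem_reverse]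
  · intro x hx
    rw [← c.mem_support_rotate_iff a ha, ← hPR]
    exact P.support_subset_support_append_left R hx
  · intro x hx
    rw [support_reverse, List.mem_reverse] at hx
    rw [← c.mem_support_rotate_iff a ha, ← hPR]
    exact P.support_subset_support_append_right R hx

end IsCycle

end SimpleGraph.Walk

section Holes

open Walk

variable {V : Type u} {G : SimpleGraph V}

lemma not_K222Free_of_octahedron {x₁ x₂ y₁ y₂ z₁ z₂ : V}
    (hx : ¬ G.Adj x₁ x₂) (hy : ¬ G.Adj y₁ y₂) (hz : ¬ G.Adj z₁ z₂)
    (hx' : x₁ ≠ x₂) (hy' : y₁ ≠ y₂) (hz' : z₁ ≠ z₂)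
    (hxy₁₁ : G.Adj x₁ y₁) (hxy₁₂ : G.Adj x₁ y₂) (hxy₂₁ : G.Adj x₂ y₁) (hxy₂₂ : G.Adj x₂ y₂)
    (hxz₁₁ : G.Adj x₁ z₁) (hxz₁₂ : G.Adj x₁ z₂) (hxz₂₁ : G.Adj x₂ z₁) (hxz₂₂ : G.Adj x₂ z₂)
    (hyz₁₁ : G.Adj y₁ z₁) (hyz₁₂ : G.Adj y₁ z₂) (hyz₂₁ : G.Adj y₂ z₁) (hyz₂₂ : G.Adj y₂ z₂) :
    ¬ K222Free G := by
  set f : Fin 3 × Fin 2 → V := fun i => ![![x₁, x₂], ![y₁, y₂], ![z₁, z₂]] i.1 i.2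
  have hadj : ∀ i j, G.Adj (f i) (f j) ↔ K222.Adj i j := by
    rintro ⟨i, s⟩ ⟨j, t⟩
    fin_cases i <;> fin_cases j <;> fin_cases s <;> fin_cases t <;>
      simp [f, K222, G.adj_comm, *]
  refine fun hfree => hfree ⟨f, fun i j hij => ?_, hadj⟩
  have hij₁ : i.1 = j.1 := by_contra fun h => G.loopless.irrefl (f i) (hij ▸ (hadj i j).2 h)
  obtain ⟨i, s⟩ := i
  obtain ⟨j, t⟩ := j
  simp only at hij₁
  subst hij₁
  fin_cases i <;> fin_cases s <;> fin_cases t <;> simp_all [f]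

lemma isHole_four {x y z w : V} (hxy : G.Adj x y) (hyz : G.Adj y z) (hzw : G.Adj z w)
    (hwx : G.Adj w x) (hxz : ¬ G.Adj x z) (hyw : ¬ G.Adj y w) (hxz' : x ≠ z) (hyw' : y ≠ w) :
    IsHole G (cons hxy (cons hyz (cons hzw (cons hwx nil)))) := by
  have := hxy.ne; have := hyz.ne; have := hzw.ne; have := hwx.ne
  refine ⟨?_, by simp, ?_⟩
  · simp [cons_isCycle_iff, cons_isPath_iff, *, Ne.symm hxz', Ne.symm hxy.ne]
  · intro a ha b hb hab
    simp only [support_cons, support_nil, List.mem_cons, List.not_mem_nil, or_false] at ha hb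
    rcases ha with rfl | rfl | rfl | rfl | rfl <;> rcases hb with rfl | rfl | rfl | rfl | rfl <;>
      simp_all [G.adj_comm]

variable {v : V} {c : G.Walk v v}

lemma IsHole.adj_iff (hc : IsHole G c) {x y : V} (hx : x ∈ c.support) (hy : y ∈ c.support) :
    G.Adj x y ↔ s(x, y) ∈ c.edges :=
  ⟨hc.2.2 x hx y hy, c.adj_of_mem_edges⟩

lemma IsHole.not_adj_of_adj_of_adj (hc : IsHole G c) {x y z : V} (hx : x ∈ c.support)
    (hy : y ∈ c.support) (hz : z ∈ c.support) (hxy : G.Adj x y) (hyz : G.Adj y z) :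
    ¬ G.Adj x z := by
  classical
  intro hxz
  have exy := (hc.adj_iff hx hy).1 hxy
  have eyz := (hc.adj_iff hy hz).1 hyz
  have exz := (hc.adj_iff hx hz).1 hxz
  have hclosed : ∀ w ∈ ({x, y, z} : Set V), ∀ t, s(w, t) ∈ c.edges → t ∈ ({x, y, z} : Set V) := by
    rintro w (rfl | rfl | rfl) t ht
    · rcases hc.1.eq_or_eq_of_mem_edges hyz.ne exy exz ht with rfl | rfl <;> simp
    · rcases hc.1.eq_or_eq_of_mem_edges hxz.ne (Sym2.eq_swap ▸ exy) eyz ht with rfl | rfl <;> simp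
    · rcases hc.1.eq_or_eq_of_mem_edges hxy.ne (Sym2.eq_swap ▸ exz) (Sym2.eq_swap ▸ eyz) ht
        with rfl | rfl <;> simp
  have := hc.1.length_le_card (S := {x, y, z}) fun t ht => by
    simpa using c.support_subset_of_mem_of_forall_mem_edges hx (by simp) hclosed t ht
  linarith [hc.2.1, Finset.card_le_three (a := x) (b := y) (c := z)]

lemma IsHole.exists_not_adj (hc : IsHole G c) {x : V} (hx : x ∈ c.support) :
    ∃ z ∈ c.support, z ≠ x ∧ ¬ G.Adj x z := by
  classical
  by_contra! h
  obtain ⟨p, q, -, hpq⟩ := hc.1.exists_mem_edges_iff hx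
  have := hc.1.length_le_card (S := {x, p, q}) fun z hz => by
    rcases eq_or_ne z x with rfl | hzx
    · simp
    · simpa using Or.inr ((hpq z).1 ((hc.adj_iff hx hz).1 (h z hz hzx)))
  linarith [hc.2.1, Finset.card_le_three (a := x) (b := p) (c := q)]

lemma not_mem_support_of_mem_holeNbrs {x : V} (hx : x ∈ holeNbrs G c) : x ∉ c.support :=
  fun h => G.loopless.irrefl x (hx x h)

lemma HoleEdgeDisjoint.eq_of_not_adj_of_mem_holeNbrs (hhed : HoleEdgeDisjoint G) {x y : V}
    (hx : x ∈ holeNbrs G c) (hy : y ∈ holeNbrs G c) (hxy : x ≠ y) (hnxy : ¬ G.Adj x y)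
    {u z z' : V} (hu : u ∈ c.support) (hz : z ∈ c.support) (hz' : z' ∈ c.support)
    (hzu : z ≠ u) (hz'u : z' ≠ u) (huz : ¬ G.Adj u z) (huz' : ¬ G.Adj u z') : z = z' := by
  have hyu : y ≠ u := fun h => not_mem_support_of_mem_holeNbrs hy (h ▸ hu)
  have hyz' : y ≠ z' := fun h => not_mem_support_of_mem_holeNbrs hy (h ▸ hz')
  have H := isHole_four (hx u hu) (hy u hu).symm (hy z hz) (hx z hz).symm hnxy huz hxy hzu.symm
  have H' := isHole_four (hx u hu) (hy u hu).symm (hy z' hz') (hx z' hz').symm hnxy huz' hxy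
    hz'u.symm
  rcases hhed _ _ _ _ H H' with h | h
  · have := (Set.ext_iff.1 h s(y, z)).1 (by simp)
    simp [hyu, hyz', hxy.symm, hzu] at this
    exact this
  · exact absurd (by simp) (h s(x, u) (by simp))

lemma IsHole.adj_of_mem_holeNbrs (hfree : K222Free G) (hhed : HoleEdgeDisjoint G)
    (hc : IsHole G c) {x y : V} (hx : x ∈ holeNbrs G c) (hy : y ∈ holeNbrs G c) (hxy : x ≠ y) :
    G.Adj x y := by
  by_contra hnxy
  have hv := c.start_mem_support
  obtain ⟨p, q, hpq, hnbr⟩ := hc.1.exists_mem_edges_iff hv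
  have hvp := (hnbr p).2 (Or.inl rfl)
  have hvq := (hnbr q).2 (Or.inr rfl)
  have hp := c.snd_mem_support_of_mem_edges hvp
  have hq := c.snd_mem_support_of_mem_edges hvq
  obtain ⟨z, hz, hzv, hvz⟩ := hc.exists_not_adj hv
  have hsupp : ∀ t ∈ c.support, t = v ∨ t = p ∨ t = q ∨ t = z := by
    intro t ht
    by_cases htv : t = v
    · exact Or.inl htv
    by_cases hvt : G.Adj v t
    · have := (hnbr t).1 ((hc.adj_iff hv ht).1 hvt)
      tauto
    · exact Or.inr (Or.inr (Or.inr
        (hhed.eq_of_not_adj_of_mem_holeNbrs hx hy hxy hnxy hv ht hz htv hzv hvt hvz)))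
  have hzpq : s(z, p) ∈ c.edges ∧ s(z, q) ∈ c.edges := by
    obtain ⟨α, β, hαβ, hznbr⟩ := hc.1.exists_mem_edges_iff hz
    have hzt : ∀ t, s(z, t) ∈ c.edges → t = p ∨ t = q := by
      intro t ht
      have hzt := c.adj_of_mem_edges ht
      rcases hsupp t (c.snd_mem_support_of_mem_edges ht) with rfl | h | h | rfl
      · exact absurd hzt.symm hvz
      · exact Or.inl h
      · exact Or.inr h
      · exact absurd hzt (G.loopless.irrefl _)
    have hα := hzt α ((hznbr α).2 (Or.inl rfl))
    have hβ := hzt β ((hznbr β).2 (Or.inr rfl))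
    rw [hznbr, hznbr]
    grind
  have hnpq : ¬ G.Adj p q :=
    hc.not_adj_of_adj_of_adj hp hv hq (c.adj_of_mem_edges hvp).symm (c.adj_of_mem_edges hvq)
  exact not_K222Free_of_octahedron hnxy hvz hnpq hxy hzv.symm hpq
    (hx v hv) (hx z hz) (hy v hv) (hy z hz) (hx p hp) (hx q hq) (hy p hp) (hy q hq)
    (c.adj_of_mem_edges hvp) (c.adj_of_mem_edges hvq)
    (c.adj_of_mem_edges hzpq.1) (c.adj_of_mem_edges hzpq.2) hfree

end Holes

section Arcs

open Walk

variable {V : Type u} {G : SimpleGraph V} {a b : V}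

lemma isHole_cons_reverse (hab : G.Adj a b) {W : G.Walk a b} (hW : W.IsPath)
    (hlen : 3 ≤ W.length) (habW : s(a, b) ∉ W.edges)
    (hind : ∀ x ∈ W.support, ∀ y ∈ W.support, G.Adj x y → s(x, y) = s(a, b) ∨ s(x, y) ∈ W.edges) :
    IsHole G (cons hab W.reverse) := by
  refine ⟨(cons_isCycle_iff _ _).2 ⟨hW.reverse, by simpa using habW⟩, by simp; omega,
    fun x hx y hy hxy => ?_⟩
  have hmem : ∀ z ∈ (cons hab W.reverse).support, z ∈ W.support := by
    simp only [support_cons, support_reverse, List.mem_cons, List.mem_reverse]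
    rintro z (rfl | hz)
    · exact W.start_mem_support
    · exact hz
  simpa using hind x (hmem x hx) y (hmem y hy) hxy

lemma HoleEdgeDisjoint.mem_edges_iff_of_isPath (hhed : HoleEdgeDisjoint G) {v : V}
    {c : G.Walk v v} (hc : IsHole G c) (he : s(a, b) ∈ c.edges) {W : G.Walk a b}
    (hW : W.IsPath) (hlen : 3 ≤ W.length) (habW : s(a, b) ∉ W.edges)
    (hind : ∀ x ∈ W.support, ∀ y ∈ W.support, G.Adj x y → s(x, y) = s(a, b) ∨ s(x, y) ∈ W.edges)
    (e : Sym2 V) : e ∈ c.edges ↔ e = s(a, b) ∨ e ∈ W.edges := by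
  have hab := c.adj_of_mem_edges he
  rcases hhed _ _ _ _ hc (isHole_cons_reverse hab hW hlen habW hind) with h | h
  · simpa using Set.ext_iff.1 h e
  · exact absurd (by simp) (h _ he)

lemma two_le_length_of_not_mem_edges (hab : a ≠ b) {W : G.Walk a b} (hW : s(a, b) ∉ W.edges) :
    2 ≤ W.length := by
  rcases W with _ | ⟨h, _ | ⟨h', W⟩⟩
  · exact absurd rfl hab
  · simp at hW
  · simp

lemma exists_eq_cons_cons_nil {W : G.Walk a b} (hW : W.length = 2) :
    ∃ (m : V) (ham : G.Adj a m) (hmb : G.Adj m b), W = cons ham (cons hmb nil) := by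
  rcases W with _ | ⟨h, _ | ⟨h', _ | ⟨h'', W⟩⟩⟩ <;> simp at hW
  exact ⟨_, h, h', rfl⟩

variable {P Q : G.Walk a b}

lemma adj_imp_of_arcs (hdisj : ∀ x ∈ P.support, x ∈ Q.support → x = a ∨ x = b)
    (hind : ∀ x ∈ P.support, ∀ y ∈ P.support, G.Adj x y →
      s(x, y) = s(a, b) ∨ s(x, y) ∈ P.edges ∨ s(x, y) ∈ Q.edges) :
    ∀ x ∈ P.support, ∀ y ∈ P.support, G.Adj x y → s(x, y) = s(a, b) ∨ s(x, y) ∈ P.edges := by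
  intro x hx y hy hxy
  rcases hind x hx y hy hxy with h | h | hQ
  · exact Or.inl h
  · exact Or.inr h
  · left
    rcases hdisj x hx (Q.fst_mem_support_of_mem_edges hQ) with rfl | rfl <;>
      rcases hdisj y hy (Q.snd_mem_support_of_mem_edges hQ) with rfl | rfl <;>
      simp_all [Sym2.eq_swap]

lemma not_adj_of_arcs (hdisj : ∀ x ∈ P.support, x ∈ Q.support → x = a ∨ x = b)
    (hind : ∀ x ∈ P.support, ∀ y ∈ Q.support, G.Adj x y →
      s(x, y) = s(a, b) ∨ s(x, y) ∈ P.edges ∨ s(x, y) ∈ Q.edges) :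
    ∀ x ∈ P.support, ∀ y ∈ Q.support, x ≠ a → x ≠ b → y ≠ a → y ≠ b → ¬ G.Adj x y := by
  intro x hx y hy hxa hxb hya hyb hxy
  rcases hind x hx y hy hxy with h | h | h
  · rcases Sym2.eq_iff.1 h with ⟨rfl, -⟩ | ⟨rfl, -⟩ <;> simp at hxa hxb
  · have := hdisj y (P.snd_mem_support_of_mem_edges h) hy
    tauto
  · have := hdisj x hx (Q.fst_mem_support_of_mem_edges h)
    tauto

end Arcs

section DeleteEdge

open Walk

variable {V : Type u} {G : SimpleGraph V} {a b : V}

lemma exists_arcs_of_isHole_deleteEdges {w : V} {d : (G.deleteEdges {s(a, b)}).Walk w w}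
    (hd : IsHole _ d) (ha : a ∈ d.support) (hb : b ∈ d.support) (hab : a ≠ b) :
    ∃ P Q : G.Walk a b, P.IsPath ∧ Q.IsPath ∧ s(a, b) ∉ P.edges ∧ s(a, b) ∉ Q.edges ∧
      (∀ x ∈ P.support, x ∈ Q.support → x = a ∨ x = b) ∧
      ∀ x, x ∈ P.support ∨ x ∈ Q.support → ∀ y, y ∈ P.support ∨ y ∈ Q.support → G.Adj x y →
        s(x, y) = s(a, b) ∨ s(x, y) ∈ P.edges ∨ s(x, y) ∈ Q.edges := by
  have hle : G.deleteEdges {s(a, b)} ≤ G := G.deleteEdges_le _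
  have hab_edges : ∀ {u u' : V} (W : (G.deleteEdges {s(a, b)}).Walk u u'), s(a, b) ∉ W.edges :=
    fun W h => by simpa using W.edges_subset_edgeSet h
  obtain ⟨P, Q, hP, hQ, hdisj, hedges, hPd, hQd⟩ := hd.1.exists_isPath_isPath ha hb hab
  refine ⟨P.mapLe hle, Q.mapLe hle, (isPath_mapLe hle).2 hP, (isPath_mapLe hle).2 hQ,
    by simpa using hab_edges P, by simpa using hab_edges Q, by simpa using hdisj, ?_⟩
  simp only [support_mapLe_eq_support, edges_mapLe_eq_edges]
  intro x hx y hy hxy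
  have hxd : x ∈ d.support := hx.elim (hPd x) (hQd x)
  have hyd : y ∈ d.support := hy.elim (hPd y) (hQd y)
  by_cases hne : s(x, y) = s(a, b)
  · exact Or.inl hne
  · exact Or.inr ((hedges _).1 ((hd.adj_iff hxd hyd).1 (by simp [hxy, hne])))

variable {v : V} {c : G.Walk v v}

lemma exists_mem_avoidSet_of_Sset_eq_empty (hS : Sset G c a b = ∅) {W : G.Walk a b}
    (hW : W.IsPath) (hlen : 2 ≤ W.length) :
    ∃ x ∈ W.support, x ≠ a ∧ x ≠ b ∧ x ∈ avoidSet G c := by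
  by_contra! h
  have hCA : IsCAvoidingPath G c W := ⟨hW, h, by omega⟩
  cases W with
  | nil => simp at hlen
  | @cons _ m _ ham r =>
    have hmb : m ≠ b := by
      rintro rfl
      have := length_eq_zero_iff.2 (isPath_iff_nil.1 ((cons_isPath_iff _ _).1 hW).1)
      simp [this] at hlen
    exact (hS ▸ ⟨_, hCA, by simp, ham.ne', hmb⟩ : m ∈ (∅ : Set V))

lemma mem_holeNbrs_of_Sset_eq_empty (hc : IsHole G c) (he : s(a, b) ∈ c.edges)
    (hS : Sset G c a b = ∅) {m : V} (ham : G.Adj a m) (hmb : G.Adj m b) : m ∈ holeNbrs G c := by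
  have hab := c.adj_of_mem_edges he
  have hW : (cons ham (cons hmb nil)).IsPath := by
    simp [cons_isPath_iff, ham.ne, hmb.ne, hab.ne]
  obtain ⟨x, hx, hxa, hxb, hxC⟩ := exists_mem_avoidSet_of_Sset_eq_empty hS hW (by simp)
  obtain rfl : x = m := by simp_all
  refine hxC.resolve_left fun hxc => ?_
  have ha := c.fst_mem_support_of_mem_edges he
  exact hc.not_adj_of_adj_of_adj ha hxc (c.snd_mem_support_of_mem_edges he) ham hmb hab

lemma false_of_long_arc (hhed : HoleEdgeDisjoint G) (hc : IsHole G c) (he : s(a, b) ∈ c.edges)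
    (hS : Sset G c a b = ∅) {P Q : G.Walk a b} (hP : P.IsPath) (hPl : 3 ≤ P.length)
    (hPab : s(a, b) ∉ P.edges)
    (hPind : ∀ x ∈ P.support, ∀ y ∈ P.support, G.Adj x y → s(x, y) = s(a, b) ∨ s(x, y) ∈ P.edges)
    (hQ : Q.IsPath) (hQl : 2 ≤ Q.length) (hdisj : ∀ x ∈ P.support, x ∈ Q.support → x = a ∨ x = b)
    (hcross : ∀ x ∈ P.support, ∀ y ∈ Q.support, x ≠ a → x ≠ b → y ≠ a → y ≠ b → ¬ G.Adj x y) :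
    False := by
  have hcP := hhed.mem_edges_iff_of_isPath hc he hP hPl hPab hPind
  obtain ⟨w, hwQ, hwa, hwb, hwC⟩ := exists_mem_avoidSet_of_Sset_eq_empty hS hQ hQl
  have hwP : w ∉ P.support := fun h => (hdisj w h hwQ).elim hwa hwb
  -- every vertex of `C` lies on `P`, so `w` must dominate `C`
  have hw : w ∈ holeNbrs G c := hwC.resolve_left fun hwc => by
    obtain ⟨p, q, -, hp⟩ := hc.1.exists_mem_edges_iff hwc
    rcases (hcP _).1 ((hp p).2 (Or.inl rfl)) with h | h
    · rcases Sym2.eq_iff.1 h with ⟨rfl, -⟩ | ⟨rfl, -⟩ <;> simp at hwa hwb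
    · exact hwP (P.fst_mem_support_of_mem_edges h)
  have hPnil : ¬ P.Nil := not_nil_of_ne (c.adj_of_mem_edges he).ne
  have hx : s(a, P.snd) ∈ P.edges := P.mk_start_snd_mem_edges hPnil
  exact hcross P.snd (List.mem_of_mem_tail (snd_mem_tail_support hPnil)) w hwQ (P.adj_snd hPnil).ne'
    (fun h => hPab (by rwa [h] at hx)) hwa hwb
    (hw _ (c.snd_mem_support_of_mem_edges ((hcP _).2 (Or.inr hx)))).symm

lemma false_of_short_arcs (hfree : K222Free G) (hhed : HoleEdgeDisjoint G) (hc : IsHole G c)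
    (he : s(a, b) ∈ c.edges) (hS : Sset G c a b = ∅) {P Q : G.Walk a b} (hPl : P.length = 2)
    (hQl : Q.length = 2) (hdisj : ∀ x ∈ P.support, x ∈ Q.support → x = a ∨ x = b)
    (hcross : ∀ x ∈ P.support, ∀ y ∈ Q.support, x ≠ a → x ≠ b → y ≠ a → y ≠ b → ¬ G.Adj x y) :
    False := by
  obtain ⟨m, ham, hmb, rfl⟩ := exists_eq_cons_cons_nil hPl
  obtain ⟨m', ham', hm'b, rfl⟩ := exists_eq_cons_cons_nil hQl
  have hmm' : m ≠ m' := by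
    rintro rfl
    exact (hdisj m (by simp) (by simp)).elim ham.ne' hmb.ne
  exact hcross m (by simp) m' (by simp) ham.ne' hmb.ne ham'.ne' hm'b.ne
    (hc.adj_of_mem_holeNbrs hfree hhed (mem_holeNbrs_of_Sset_eq_empty hc he hS ham hmb)
      (mem_holeNbrs_of_Sset_eq_empty hc he hS ham' hm'b) hmm')

lemma not_isHole_deleteEdges_of_mem_support (hfree : K222Free G) (hhed : HoleEdgeDisjoint G)
    (hc : IsHole G c) (he : s(a, b) ∈ c.edges) (hS : Sset G c a b = ∅) {w : V}
    {d : (G.deleteEdges {s(a, b)}).Walk w w} (ha : a ∈ d.support) (hb : b ∈ d.support) :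
    ¬ IsHole _ d := by
  intro hd
  have hab := (c.adj_of_mem_edges he).ne
  obtain ⟨P, Q, hP, hQ, hPab, hQab, hdisj, hind⟩ := exists_arcs_of_isHole_deleteEdges hd ha hb hab
  have hdisj' : ∀ x ∈ Q.support, x ∈ P.support → x = a ∨ x = b := fun x hxQ hxP => hdisj x hxP hxQ
  have hcross := not_adj_of_arcs hdisj fun x hx y hy => hind x (Or.inl hx) y (Or.inr hy)
  have hPind := adj_imp_of_arcs hdisj fun x hx y hy => hind x (Or.inl hx) y (Or.inl hy)
  have hQind := adj_imp_of_arcs hdisj' fun x hx y hy hxy =>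
    (hind x (Or.inr hx) y (Or.inr hy) hxy).imp_right Or.symm
  have hPl := two_le_length_of_not_mem_edges hab hPab
  have hQl := two_le_length_of_not_mem_edges hab hQab
  rcases Nat.lt_or_ge 2 P.length with hP3 | hP2
  · exact false_of_long_arc hhed hc he hS hP hP3 hPab hPind hQ hQl hdisj hcross
  rcases Nat.lt_or_ge 2 Q.length with hQ3 | hQ2
  · exact false_of_long_arc hhed hc he hS hQ hQ3 hQab hQind hP hPl hdisj'
      fun x hx y hy hxa hxb hya hyb hxy => hcross y hy x hx hya hyb hxa hxb hxy.symm
  · exact false_of_short_arcs hfree hhed hc he hS (by omega) (by omega) hdisj hcross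

lemma isHole_mapLe_of_isHole_deleteEdges (hfree : K222Free G) (hhed : HoleEdgeDisjoint G)
    (hc : IsHole G c) (he : s(a, b) ∈ c.edges) (hS : Sset G c a b = ∅) {w : V}
    {d : (G.deleteEdges {s(a, b)}).Walk w w} (hd : IsHole _ d) :
    IsHole G (d.mapLe (G.deleteEdges_le _)) := by
  refine ⟨(isCycle_mapLe _).2 hd.1, by simpa using hd.2.1, ?_⟩
  simp only [support_mapLe_eq_support, edges_mapLe_eq_edges]
  intro x hx y hy hxy
  refine hd.2.2 x hx y hy ((deleteEdges_adj ..).2 ⟨hxy, fun h => ?_⟩)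
  rcases Sym2.eq_iff.1 (Set.mem_singleton_iff.1 h) with ⟨rfl, rfl⟩ | ⟨rfl, rfl⟩
  · exact not_isHole_deleteEdges_of_mem_support hfree hhed hc he hS hx hy hd
  · exact not_isHole_deleteEdges_of_mem_support hfree hhed hc he hS hy hx hd

lemma K222Free.deleteEdges (hfree : K222Free G) (hc : IsHole G c) (he : s(a, b) ∈ c.edges)
    (hS : Sset G c a b = ∅) : K222Free (G.deleteEdges {s(a, b)}) := by
  rintro ⟨f, hinj, hf⟩
  have hG : ∀ p q, K222.Adj p q → G.Adj (f p) (f q) :=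
    fun p q h => G.deleteEdges_le _ ((hf p q).2 h)
  by_cases hends : (∃ i, f i = a) ∧ ∃ j, f j = b
  · obtain ⟨⟨i, rfl⟩, j, rfl⟩ := hends
    have hij : i.1 = j.1 := by
      by_contra h
      simpa using (hf i j).2 h
    obtain ⟨k, l, hkl, hki, hli⟩ : ∃ k l : Fin 3, k ≠ l ∧ k ≠ i.1 ∧ l ≠ i.1 := by
      have : ∀ i : Fin 3, ∃ k l : Fin 3, k ≠ l ∧ k ≠ i ∧ l ≠ i := by decide
      exact this i.1
    have hN : ∀ p : Fin 3 × Fin 2, p.1 ≠ i.1 → f p ∈ holeNbrs G c := fun p hp =>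
      mem_holeNbrs_of_Sset_eq_empty hc he hS (hG i p hp.symm)
        (hG p j (show p.1 ≠ j.1 from hij ▸ hp))
    have hpart : ∀ m, m ≠ i.1 → ¬ G.Adj (f (m, 0)) (f (m, 1)) := by
      intro m hm h
      have hmi : f (m, 0) ≠ f i := hinj.ne fun h => hm (congrArg Prod.fst h)
      have hmj : f (m, 0) ≠ f j := hinj.ne fun h => hm (hij ▸ congrArg Prod.fst h)
      exact (hf (m, 0) (m, 1)).1 (by simp [h, hmi, hmj]) rfl
    obtain ⟨z, hz, hzi, hnz⟩ := hc.exists_not_adj (c.fst_mem_support_of_mem_edges he)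
    exact not_K222Free_of_octahedron hnz (hpart k hki) (hpart l hli) hzi.symm
      (hinj.ne (by simp)) (hinj.ne (by simp))
      (hG _ _ hki.symm) (hG _ _ hki.symm) (hN _ hki z hz).symm (hN _ hki z hz).symm
      (hG _ _ hli.symm) (hG _ _ hli.symm) (hN _ hli z hz).symm (hN _ hli z hz).symm
      (hG _ _ hkl) (hG _ _ hkl) (hG _ _ hkl) (hG _ _ hkl) hfree
  · refine hfree ⟨f, hinj, fun p q => ?_⟩
    rw [← hf p q, deleteEdges_adj, Set.mem_singleton_iff, Sym2.eq_iff, iff_self_and]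
    rintro - (⟨hp, hq⟩ | ⟨hp, hq⟩)
    exacts [hends ⟨⟨p, hp⟩, q, hq⟩, hends ⟨⟨q, hq⟩, p, hp⟩]

end DeleteEdge

section Subgraphs

open Walk

variable {V : Type u} {G G' : SimpleGraph V}

lemma HoleEdgeDisjoint.of_isHole_mapLe (hhed : HoleEdgeDisjoint G) (hle : G' ≤ G)
    (hmap : ∀ (w : V) (d : G'.Walk w w), IsHole G' d → IsHole G (d.mapLe hle)) :
    HoleEdgeDisjoint G' := by
  intro u w d₁ d₂ h₁ h₂
  simpa [edges_mapLe_eq_edges] using hhed u w _ _ (hmap u d₁ h₁) (hmap w d₂ h₂)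

lemma holeCount_le_sub_one_of_isHole_mapLe [Finite V] (hle : G' ≤ G)
    (hmap : ∀ (w : V) (d : G'.Walk w w), IsHole G' d → IsHole G (d.mapLe hle))
    {v : V} {c : G.Walk v v} (hc : IsHole G c) {e : Sym2 V} (he : e ∈ c.edges)
    (he' : e ∉ G'.edgeSet) : holeCount G' ≤ holeCount G - 1 := by
  set A := {s : Set (Sym2 V) | ∃ (u : V) (d : G.Walk u u), IsHole G d ∧ s = {e | e ∈ d.edges}}
  set A' := {s : Set (Sym2 V) | ∃ (u : V) (d : G'.Walk u u), IsHole G' d ∧ s = {e | e ∈ d.edges}}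
  have hsub : A' ⊆ A \ {{e | e ∈ c.edges}} := by
    rintro _ ⟨w, d, hd, rfl⟩
    refine ⟨⟨w, d.mapLe hle, hmap w d hd, by simp⟩, fun h => he' ?_⟩
    exact d.edges_subset_edgeSet (Set.ext_iff.1 h e |>.2 he)
  calc holeCount G' = A'.ncard := rfl
    _ ≤ (A \ {{e | e ∈ c.edges}}).ncard := Set.ncard_le_ncard hsub (Set.toFinite _)
    _ = holeCount G - 1 := Set.ncard_sdiff_singleton_of_mem (s := A) ⟨v, c, hc, rfl⟩

end Subgraphs

/-- If `S_{C,e} = ∅`, then `G − e` is a `K_{2,2,2}`-free hole-edge-disjoint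
graph with `h(G − e) ≤ h(G) − 1`. -/
theorem deleteEdge_of_Sset_empty
    {V : Type u} [Fintype V] (G : SimpleGraph V) (hfree : K222Free G)
    (hhed : HoleEdgeDisjoint G) {v : V} (c : G.Walk v v) (hc : IsHole G c)
    {a b : V} (he : s(a, b) ∈ c.edges) (hS : Sset G c a b = ∅) :
    K222Free (G.deleteEdges {s(a, b)}) ∧ HoleEdgeDisjoint (G.deleteEdges {s(a, b)}) ∧
      holeCount (G.deleteEdges {s(a, b)}) ≤ holeCount G - 1 := by
  have hmap : ∀ (w : V) (d : (G.deleteEdges {s(a, b)}).Walk w w),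
      IsHole _ d → IsHole G (d.mapLe (G.deleteEdges_le _)) :=
    fun _ _ hd => isHole_mapLe_of_isHole_deleteEdges hfree hhed hc he hS hd
  exact ⟨hfree.deleteEdges hc he hS, hhed.of_isHole_mapLe _ hmap,
    holeCount_le_sub_one_of_isHole_mapLe _ hmap hc he (by simp)⟩
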